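/- Let mu be a probability measure on [0,1]. Then d(mu, delta_0) = 1 - 2*P_e(mu) <= sqrt(1 - B(mu)^2) <= sqrt(2*(1 - B(mu))), where delta_0 is the Dirac mass at 0, P_e(mu) = integral of (1-z)/2 d mu, B(mu) = integral of sqrt(1-z^2) d mu, and d is the Wasserstein-1 distance. -/

import Mathlib

open MeasureTheory

/-- Cumulative distribution function of a measure on `ℝ`. -/
noncomputable def cdf (μ : Measure ℝ) (x : ℝ) : ℝ := (μ (Set.Iic x)).toReal

/-- The Battacharyya functional of a `|D|`-distribution. -/
noncomputable def batta (μ : Measure ℝ) : ℝ := ∫ z, Real.sqrt (1 - z^2) ∂μ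

/-- The error probability functional of a `|D|`-distribution. -/
noncomputable def perr (μ : Measure ℝ) : ℝ := ∫ z, (1 - z)/2 ∂μ

/-!
For `z ≥ 0` the integrand `|F_μ(z) - F_{δ₀}(z)|` is the tail `μ (z, ∞)`, so by the layer-cake
formula the distance is the mean `∫ z dμ = 1 - 2 P_e(μ)`. Since `z² + (√(1 - z²))² = 1` on
`[0, 1]`, Jensen's inequality for the Euclidean norm of `(z, √(1 - z²))` gives
`(∫ z dμ)² + B(μ)² ≤ 1`. The last inequality is `1 - B² ≤ 2 (1 - B)`, i.e. `(1 - B)² ≥ 0`.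
-/

lemma cdf_dirac_of_le {a z : ℝ} (h : a ≤ z) : cdf (Measure.dirac a) z = 1 := by
  simp [cdf, Measure.dirac_apply_of_mem (Set.mem_Iic.mpr h)]

lemma one_sub_cdf (μ : Measure ℝ) [IsProbabilityMeasure μ] (z : ℝ) :
    1 - cdf μ z = μ.real (Set.Ioi z) := by
  rw [← Set.compl_Iic, probReal_compl_eq_one_sub measurableSet_Iic, cdf, measureReal_def]

lemma abs_cdf_sub_cdf_dirac_of_le (μ : Measure ℝ) [IsProbabilityMeasure μ] {a z : ℝ}
    (h : a ≤ z) : |cdf μ z - cdf (Measure.dirac a) z| = μ.real (Set.Ioi z) := by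
  rw [cdf_dirac_of_le h, abs_sub_comm, one_sub_cdf, abs_of_nonneg measureReal_nonneg]

lemma integral_id_eq_intervalIntegral_measureReal_Ioi (μ : Measure ℝ) [IsFiniteMeasure μ]
    {M : ℝ} (hM : 0 ≤ M) (hμ : ∀ᵐ z ∂μ, z ∈ Set.Icc 0 M) :
    ∫ z, z ∂μ = ∫ t in (0:ℝ)..M, μ.real (Set.Ioi t) := by
  have hint : Integrable (fun z : ℝ => z) μ := by
    refine Integrable.of_bound aestronglyMeasurable_id M ?_
    filter_upwards [hμ] with z hz
    rw [Real.norm_of_nonneg hz.1]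
    exact hz.2
  rw [hint.integral_eq_integral_Ioc_meas_le (hμ.mono fun _ hz => hz.1)
      (hμ.mono fun _ hz => hz.2), intervalIntegral.integral_of_le hM]
  refine integral_congr_ae ?_
  filter_upwards [ae_restrict_of_ae (meas_le_ae_eq_meas_lt μ volume id)] with t ht
  exact congrArg ENNReal.toReal ht

/-- Jensen's inequality for the norm, applied to `f + g i` in `ℂ`. -/
lemma sq_integral_add_sq_integral_le_one {α : Type*} [MeasurableSpace α] (μ : Measure α)
    [IsProbabilityMeasure μ] {f g : α → ℝ} (hf : Integrable f μ) (hg : Integrable g μ)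
    (hfg : ∀ᵐ x ∂μ, f x ^ 2 + g x ^ 2 ≤ 1) :
    (∫ x, f x ∂μ) ^ 2 + (∫ x, g x ∂μ) ^ 2 ≤ 1 := by
  set F : α → ℂ := fun x => f x + g x * Complex.I
  have hnormF : ∀ᵐ x ∂μ, ‖F x‖ ≤ 1 := by
    filter_upwards [hfg] with x hx
    rw [← sq_le_one_iff₀ (norm_nonneg _), Complex.sq_norm, Complex.normSq_add_mul_I]
    exact hx
  have hintF : ∫ x, F x ∂μ = ↑(∫ x, f x ∂μ) + ↑(∫ x, g x ∂μ) * Complex.I := by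
    rw [integral_add hf.ofReal (hg.ofReal.mul_const _), integral_mul_const,
      integral_complex_ofReal, integral_complex_ofReal]
  have hle := norm_integral_le_of_norm_le_const hnormF
  rw [probReal_univ, mul_one, ← sq_le_one_iff₀ (norm_nonneg _), Complex.sq_norm, hintF,
    Complex.normSq_add_mul_I] at hle
  exact hle

lemma one_sub_two_mul_perr (μ : Measure ℝ) [IsProbabilityMeasure μ]
    (hint : Integrable (fun z : ℝ => z) μ) : 1 - 2 * perr μ = ∫ z, z ∂μ := by
  rw [perr, integral_div, integral_sub (integrable_const 1) hint, integral_const, probReal_univ,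
    one_smul]
  ring

lemma le_sqrt_one_sub_sq_of_sq_add_sq_le_one {a b : ℝ} (h : a ^ 2 + b ^ 2 ≤ 1) :
    a ≤ Real.sqrt (1 - b ^ 2) :=
  (le_abs_self a).trans (Real.abs_le_sqrt (by linarith))

lemma sqrt_one_sub_sq_le_sqrt_two_mul_one_sub (b : ℝ) :
    Real.sqrt (1 - b ^ 2) ≤ Real.sqrt (2 * (1 - b)) :=
  Real.sqrt_le_sqrt (by nlinarith [sq_nonneg (1 - b)])

/-- Distance to the point mass at `0`:
`d(μ, δ₀) = 1 - 2 P_e(μ) ≤ √(1 - B(μ)²) ≤ √(2(1 - B(μ)))`. -/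
theorem wasserstein_to_delta_zero (μ : Measure ℝ) [IsProbabilityMeasure μ]
    (hμ : μ (Set.Icc (0:ℝ) 1)ᶜ = 0) :
    (∫ z in (0:ℝ)..1, |cdf μ z - cdf (Measure.dirac (0:ℝ)) z|) = 1 - 2 * perr μ ∧
    1 - 2 * perr μ ≤ Real.sqrt (1 - (batta μ)^2) ∧
    Real.sqrt (1 - (batta μ)^2) ≤ Real.sqrt (2 * (1 - batta μ)) := by
  have hae : ∀ᵐ z ∂μ, z ∈ Set.Icc (0:ℝ) 1 := mem_ae_iff.mpr hμ
  have hid : Integrable (fun z : ℝ => z) μ :=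
    Integrable.of_bound aestronglyMeasurable_id 1 (hae.mono fun z hz => by
      rw [Real.norm_of_nonneg hz.1]; exact hz.2)
  have hsqrt : Integrable (fun z : ℝ => Real.sqrt (1 - z ^ 2)) μ :=
    Integrable.of_bound (by fun_prop) 1 (ae_of_all _ fun z => by
      rw [Real.norm_of_nonneg (Real.sqrt_nonneg _), Real.sqrt_le_one]
      nlinarith [sq_nonneg z])
  have hcircle : ∀ᵐ z ∂μ, z ^ 2 + Real.sqrt (1 - z ^ 2) ^ 2 ≤ 1 := by
    filter_upwards [hae] with z hz
    rw [Real.sq_sqrt (by nlinarith [hz.1, hz.2])]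
    linarith
  rw [one_sub_two_mul_perr μ hid]
  refine ⟨?_, le_sqrt_one_sub_sq_of_sq_add_sq_le_one
    (sq_integral_add_sq_integral_le_one μ hid hsqrt hcircle),
    sqrt_one_sub_sq_le_sqrt_two_mul_one_sub _⟩
  rw [integral_id_eq_intervalIntegral_measureReal_Ioi μ zero_le_one hae]
  refine intervalIntegral.integral_congr fun z hz => ?_
  rw [Set.uIcc_of_le zero_le_one] at hz
  exact abs_cdf_sub_cdf_dirac_of_le μ hz.1
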